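/- [Monotonicity of the U-update] Let U ∈ 𝒫 and Q ∈ 𝕆, and set Z := ΦQQᵀΦᵀ. If U' ∈ 𝒫 satisfies ⟨ZU, V⟩ ≤ ⟨ZU, U'⟩ for all V ∈ 𝒫, then ⟨U'ᵀΦQ, U'ᵀΦQ⟩ ≥ ⟨UᵀΦQ, UᵀΦQ⟩; that is, the objective value cannot decrease through the U-update: f(U',Q) ≥ f(U,Q). -/

import Mathlib

open Matrix BigOperators Filter

noncomputable section

/-- Frobenius inner product of two real matrices of the same size. -/
def frob {α β : Type*} [Fintype α] [Fintype β] (A B : Matrix α β ℝ) : ℝ :=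
  ∑ u, ∑ v, A u v * B u v

/-- The set 𝒫: blockwise partial permutation matrices. Rows indexed by pairs (i,r),
1 ≤ i ≤ k, 1 ≤ r ≤ m i; columns by Fin d. Entries in {0,1}, exactly one 1 per row,
each block column sum at most 1. -/
def isP {k : ℕ} (d : ℕ) (m : Fin k → ℕ)
    (U : Matrix (Σ i : Fin k, Fin (m i)) (Fin d) ℝ) : Prop :=
  (∀ u v, U u v = 0 ∨ U u v = 1) ∧
  (∀ u, ∃! v, U u v = 1) ∧
  (∀ (i : Fin k) (c : Fin d), ∑ r : Fin (m i), U ⟨i, r⟩ c ≤ 1)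

/-- The set 𝕆: block-orthogonal matrices; each b×b block is orthogonal. -/
def isO (k b : ℕ) (Q : Matrix (Fin k × Fin b) (Fin b) ℝ) : Prop :=
  ∀ i : Fin k,
    (Matrix.of fun s t => Q (i, s) t) * (Matrix.of fun s t => Q (i, s) t)ᵀ =
      (1 : Matrix (Fin b) (Fin b) ℝ)

/-- Φ is block-diagonal: entries with mismatched block indices vanish. -/
def isBlockDiag {k : ℕ} (m : Fin k → ℕ) (b : ℕ)
    (Φ : Matrix (Σ i : Fin k, Fin (m i)) (Fin k × Fin b) ℝ) : Prop :=
  ∀ (i : Fin k) (r : Fin (m i)) (j : Fin k) (s : Fin b), i ≠ j → Φ ⟨i, r⟩ (j, s) = 0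

/-- The objective f(U,Q) = ⟨UᵀΦQ, UᵀΦQ⟩. -/
def obj {k b d : ℕ} (m : Fin k → ℕ)
    (Φ : Matrix (Σ i : Fin k, Fin (m i)) (Fin k × Fin b) ℝ)
    (U : Matrix (Σ i : Fin k, Fin (m i)) (Fin d) ℝ)
    (Q : Matrix (Fin k × Fin b) (Fin b) ℝ) : ℝ :=
  frob (Uᵀ * Φ * Q) (Uᵀ * Φ * Q)

/-! With `A := Φ * Q` one has `⟨ZU, V⟩ = ⟨UᵀA, VᵀA⟩`. Testing the hypothesis at `V = U` gives
`‖x‖² ≤ ⟨x, y⟩` for `x := UᵀA`, `y := U'ᵀA`, and then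
`‖y‖² - ‖x‖² = ‖y - x‖² + 2(⟨x, y⟩ - ‖x‖²) ≥ 0`. -/

section Frobenius

variable {α β γ : Type*} [Fintype α] [Fintype β] [Fintype γ]

lemma frob_eq_trace (A B : Matrix α β ℝ) : frob A B = (Aᵀ * B).trace := by
  rw [frob, Finset.sum_comm]
  simp [Matrix.trace, Matrix.mul_apply]

lemma frob_transpose (A B : Matrix α β ℝ) : frob Aᵀ Bᵀ = frob A B := by
  simp only [frob, transpose_apply]
  exact Finset.sum_comm

lemma frob_mul_left (A : Matrix α γ ℝ) (B : Matrix γ β ℝ) (C : Matrix α β ℝ) :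
    frob (A * B) C = frob B (Aᵀ * C) := by
  rw [frob_eq_trace, frob_eq_trace, transpose_mul, Matrix.mul_assoc]

lemma frob_mul_transpose_mul (A : Matrix α β ℝ) (U V : Matrix α γ ℝ) :
    frob (A * Aᵀ * U) V = frob (Uᵀ * A) (Vᵀ * A) := by
  rw [Matrix.mul_assoc, frob_mul_left, ← frob_transpose,
    transpose_mul, transpose_mul, transpose_transpose]

lemma frob_self_sub_frob_self (X Y : Matrix α β ℝ) :
    frob Y Y - frob X X = frob (Y - X) (Y - X) + 2 * (frob X Y - frob X X) := by
  simp only [frob, Matrix.sub_apply, Finset.mul_sum, ← Finset.sum_sub_distrib,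
    ← Finset.sum_add_distrib]
  refine Finset.sum_congr rfl fun _ _ => Finset.sum_congr rfl fun _ _ => ?_
  ring

lemma frob_self_nonneg (X : Matrix α β ℝ) : 0 ≤ frob X X :=
  Finset.sum_nonneg fun _ _ => Finset.sum_nonneg fun _ _ => mul_self_nonneg _

lemma frob_self_le_frob_self_of_le {X Y : Matrix α β ℝ} (h : frob X X ≤ frob X Y) :
    frob X X ≤ frob Y Y := by
  have := frob_self_sub_frob_self X Y
  nlinarith [frob_self_nonneg (Y - X)]

end Frobenius

theorem monotonicity_U_update_general (k b d : ℕ)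
    (m : Fin k → ℕ)
    (Φ : Matrix (Σ i : Fin k, Fin (m i)) (Fin k × Fin b) ℝ)
    (U U' : Matrix (Σ i : Fin k, Fin (m i)) (Fin d) ℝ)
    (Q : Matrix (Fin k × Fin b) (Fin b) ℝ)
    (hU : isP d m U)
    (hproj : ∀ V, isP d m V →
      frob (Φ * Q * Qᵀ * Φᵀ * U) V ≤ frob (Φ * Q * Qᵀ * Φᵀ * U) U') :
    obj m Φ U' Q ≥ obj m Φ U Q := by
  have hZ : Φ * Q * Qᵀ * Φᵀ = (Φ * Q) * (Φ * Q)ᵀ := by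
    rw [transpose_mul, Matrix.mul_assoc (Φ * Q)]
  have hobj (W : Matrix _ (Fin d) ℝ) : obj m Φ W Q = frob (Wᵀ * (Φ * Q)) (Wᵀ * (Φ * Q)) := by
    rw [obj, Matrix.mul_assoc]
  have hUU' := hproj U hU
  rw [hZ, frob_mul_transpose_mul, frob_mul_transpose_mul] at hUU'
  rw [ge_iff_le, hobj, hobj]
  exact frob_self_le_frob_self_of_le hUU'

theorem monotonicity_U_update (k b d : ℕ) (hk : 0 < k) (hb : 0 < b) (hd : 0 < d)
    (m : Fin k → ℕ) (hm : ∀ i, 0 < m i)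
    (Φ : Matrix (Σ i : Fin k, Fin (m i)) (Fin k × Fin b) ℝ) (hΦ : isBlockDiag m b Φ)
    (U U' : Matrix (Σ i : Fin k, Fin (m i)) (Fin d) ℝ)
    (Q : Matrix (Fin k × Fin b) (Fin b) ℝ)
    (hU : isP d m U) (hQ : isO k b Q) (hU' : isP d m U')
    (hproj : ∀ V, isP d m V →
      frob (Φ * Q * Qᵀ * Φᵀ * U) V ≤ frob (Φ * Q * Qᵀ * Φᵀ * U) U') :
    obj m Φ U' Q ≥ obj m Φ U Q :=
  monotonicity_U_update_general k b d m Φ U U' Q hU hproj
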